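/- Every 1-skeletal symmetric simplicial set is spiny. -/

import Mathlib

/-- A symmetric (simplicial) set: a functor `Υᵒᵖ → Set`, where `Υ` has objects
`[n] = {0,…,n}` (encoded as `Fin (n+1)`) and all functions as morphisms.
For `α : [m] → [n]` and `x ∈ X_n`, `act α x` is `x · α ∈ X_m`. -/
structure SymSet where
  obj : ℕ → Type
  act : ∀ {m n : ℕ}, (Fin (m + 1) → Fin (n + 1)) → obj n → obj m
  act_id : ∀ {n : ℕ} (x : obj n), act id x = x
  act_comp : ∀ {m n k : ℕ} (α : Fin (m + 1) → Fin (n + 1)) (β : Fin (n + 1) → Fin (k + 1))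
      (x : obj k), act α (act β x) = act (β ∘ α) x

namespace SymSet

/-- `x_{ij} ∈ X_1`, the action on `x ∈ X_n` of the map `[1] → [n]` with `0 ↦ i`, `1 ↦ j`. -/
def edge (X : SymSet) {n : ℕ} (i j : Fin (n + 1)) (x : X.obj n) : X.obj 1 :=
  X.act (fun t : Fin 2 => if t = 0 then i else j) x

/-- The domain of an edge, its image under `ι₀ : [0] → [1]`, `0 ↦ 0`. -/
def edgeDom (X : SymSet) (f : X.obj 1) : X.obj 0 :=
  X.act (fun _ : Fin 1 => (0 : Fin 2)) f

/-- The codomain of an edge, its image under `ι₁ : [0] → [1]`, `0 ↦ 1`. -/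
def edgeCod (X : SymSet) (f : X.obj 1) : X.obj 0 :=
  X.act (fun _ : Fin 1 => (1 : Fin 2)) f

/-- The identity edge `id_a` on an object `a ∈ X_0`, induced by the unique map `[1] → [0]`. -/
def identityEdge (X : SymSet) (a : X.obj 0) : X.obj 1 :=
  X.act (fun _ : Fin 2 => (0 : Fin 1)) a

/-- An edge is an identity if it is in the image of `X_0 → X_1`. -/
def IsIdentityEdge (X : SymSet) (f : X.obj 1) : Prop :=
  ∃ a : X.obj 0, f = X.identityEdge a

/-- The tuple of edges `x_{ij}` (for `i < j` an edge `{i,j}` of the spine `T`)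
associated to an `n`-simplex `x`. -/
def spineTuple (X : SymSet) {n : ℕ} (T : SimpleGraph (Fin (n + 1))) (x : X.obj n) :
    ∀ i j : Fin (n + 1), i < j → T.Adj i j → X.obj 1 :=
  fun i j _ _ => X.edge i j x

/-- Membership in `lim_T X`: the components have matching endpoints. -/
def IsSpineLim (X : SymSet) {n : ℕ} (T : SimpleGraph (Fin (n + 1)))
    (e : ∀ i j : Fin (n + 1), i < j → T.Adj i j → X.obj 1) : Prop :=
  ∃ v : Fin (n + 1) → X.obj 0, ∀ (i j : Fin (n + 1)) (hlt : i < j) (h : T.Adj i j),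
    X.edgeDom (e i j hlt h) = v i ∧ X.edgeCod (e i j hlt h) = v j

/-- The limit `lim_T X` of the diagram associated to a spine `T`. -/
def SpineLim (X : SymSet) {n : ℕ} (T : SimpleGraph (Fin (n + 1))) : Type :=
  { e : ∀ i j : Fin (n + 1), i < j → T.Adj i j → X.obj 1 // X.IsSpineLim T e }

lemma spineTuple_isSpineLim (X : SymSet) {n : ℕ} (T : SimpleGraph (Fin (n + 1)))
    (x : X.obj n) : X.IsSpineLim T (X.spineTuple T x) := by
  refine ⟨fun i => X.act (fun _ : Fin 1 => i) x, fun i j hlt h => ⟨?_, ?_⟩⟩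
  · show X.act _ (X.act _ x) = _
    rw [X.act_comp]
    show X.act ((fun t : Fin 2 => if t = 0 then i else j) ∘ fun _ : Fin 1 => 0) x
      = X.act (fun _ : Fin 1 => i) x
    congr 1
  · show X.act _ (X.act _ x) = _
    rw [X.act_comp]
    show X.act ((fun t : Fin 2 => if t = 0 then i else j) ∘ fun _ : Fin 1 => 1) x
      = X.act (fun _ : Fin 1 => j) x
    congr 1

/-- The map `𝓔_T : X_n → lim_T X`. -/
def spineMap (X : SymSet) {n : ℕ} (T : SimpleGraph (Fin (n + 1))) (x : X.obj n) :
    X.SpineLim T :=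
  ⟨X.spineTuple T x, X.spineTuple_isSpineLim T x⟩

/-- A symmetric set is *spiny* if `𝓔_T` is injective for every `n ≥ 1` and
every spine `T` of `[n]` (a tree with vertex set `[n]`). -/
def Spiny (X : SymSet) : Prop :=
  ∀ n : ℕ, 1 ≤ n → ∀ T : SimpleGraph (Fin (n + 1)), T.IsTree →
    Function.Injective (X.spineMap T)

/-- An element `x ∈ X_n` is degenerate if `x = y · σ` for some noninvertible
surjection `σ : [n] → [k]`. -/
def Degenerate (X : SymSet) {n : ℕ} (x : X.obj n) : Prop :=
  ∃ (k : ℕ) (σ : Fin (n + 1) → Fin (k + 1)) (y : X.obj k),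
    Function.Surjective σ ∧ ¬ Function.Bijective σ ∧ x = X.act σ y

/-- A symmetric subset (subfunctor) of `X`. -/
structure SymSubset (X : SymSet) where
  carrier : ∀ n : ℕ, Set (X.obj n)
  act_mem : ∀ {m n : ℕ} (α : Fin (m + 1) → Fin (n + 1)) {x : X.obj n},
    x ∈ carrier n → X.act α x ∈ carrier m

/-- `X` is `n`-skeletal: the smallest symmetric subset of `X` containing all
of its `n`-simplices is all of `X`. -/
def IsSkeletal (X : SymSet) (n : ℕ) : Prop :=
  ∀ Y : SymSubset X, (∀ x : X.obj n, x ∈ Y.carrier n) →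
    ∀ (m : ℕ) (x : X.obj m), x ∈ Y.carrier m

/-- `X` has dimension `n`: it is `n`-skeletal but not `k`-skeletal for `k < n`
(for `n ≥ 1` this is equivalent to not being `(n-1)`-skeletal). -/
def HasDim (X : SymSet) (n : ℕ) : Prop :=
  X.IsSkeletal n ∧ ∀ k : ℕ, k < n → ¬ X.IsSkeletal k

/-- Two objects are related if there is an edge between them (in either direction). -/
def EdgeRel (X : SymSet) (a b : X.obj 0) : Prop :=
  ∃ f : X.obj 1, (X.edgeDom f = a ∧ X.edgeCod f = b) ∨ (X.edgeDom f = b ∧ X.edgeCod f = a)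

/-- `X` is connected: it is nonempty and any two objects are joined by a
zig-zag of edges. -/
def Connected (X : SymSet) : Prop :=
  Nonempty (X.obj 0) ∧ ∀ a b : X.obj 0, Relation.ReflTransGen X.EdgeRel a b

/-- `n_a`: the number of nonidentity edges with domain `a`. -/
noncomputable def nEdges (X : SymSet) (a : X.obj 0) : ℕ :=
  Nat.card { f : X.obj 1 // X.edgeDom f = a ∧ ¬ X.IsIdentityEdge f }

/-- `p(X)`: the maximum of the `n_a` over all objects `a`. -/
noncomputable def pVal (X : SymSet) : ℕ := ⨆ a : X.obj 0, X.nEdges a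

/-- A map of symmetric sets (a natural transformation). -/
structure SymMap (X Y : SymSet) where
  app : ∀ n : ℕ, X.obj n → Y.obj n
  naturality : ∀ {m n : ℕ} (α : Fin (m + 1) → Fin (n + 1)) (x : X.obj n),
    app m (X.act α x) = Y.act α (app n x)

/-- A map of symmetric sets is an isomorphism iff it is levelwise bijective. -/
def SymMap.IsIso {X Y : SymSet} (F : SymMap X Y) : Prop :=
  ∀ n : ℕ, Function.Bijective (F.app n)

/-- `X` and `Y` are isomorphic symmetric sets. -/
def Isomorphic (X Y : SymSet) : Prop := ∃ F : SymMap X Y, F.IsIso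

/-- The Bousfield–Segal map `𝓑_m : X_m → X_1^m`, `x ↦ (x_{01}, x_{02}, …, x_{0m})`. -/
def bousfield (X : SymSet) {m : ℕ} (x : X.obj m) : Fin m → X.obj 1 :=
  fun i => X.edge 0 i.succ x

/-- `X` is spiny in degrees below `q`: `𝓔_T` is injective for every spine `T`
of `[n]` for each `1 ≤ n ≤ q`. -/
def SpinyBelow (X : SymSet) (q : ℕ) : Prop :=
  ∀ n : ℕ, 1 ≤ n → n ≤ q → ∀ T : SimpleGraph (Fin (n + 1)), T.IsTree →
    Function.Injective (X.spineMap T)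

/-- `X` is a groupoid: `𝓔_T : X_n → lim_T X` is a bijection for every `n ≥ 1`
and every spine `T` of `[n]`. -/
def IsGroupoid (X : SymSet) : Prop :=
  ∀ n : ℕ, 1 ≤ n → ∀ T : SimpleGraph (Fin (n + 1)), T.IsTree →
    Function.Bijective (X.spineMap T)

/-- `X` is reduced: `X_0` is a singleton. -/
def Reduced (X : SymSet) : Prop := Nonempty (X.obj 0) ∧ Subsingleton (X.obj 0)

/-- A partial group is a reduced spiny symmetric set. -/
def IsPartialGroup (X : SymSet) : Prop := X.Reduced ∧ X.Spiny

/-- The levelwise product of two symmetric sets. -/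
def prod (X Y : SymSet) : SymSet where
  obj n := X.obj n × Y.obj n
  act α p := (X.act α p.1, Y.act α p.2)
  act_id p := by cases p with | mk a b => simp only [X.act_id, Y.act_id]
  act_comp α β p := by cases p with | mk a b => simp only [X.act_comp, Y.act_comp]

end SymSet

/-! In a 1-skeletal symmetric set every `n`-simplex is `y · α` for an edge `y` and a map
`α : [n] → [1]`, so its edges are `x_{ij} = y_{α(i) α(j)}`. Either `x` is the total degeneracy
of a vertex, or `y` can be taken to be a nonidentity edge and `α` surjective. In the latter case a spine edge
`{i, j}` across which `α` jumps from `0` to `1` recovers `y = x_{ij}`; once `y` is known, `α` is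
recovered along the spine, because `y_{ab} = y_{ab'}` with `b ≠ b'` would force `y` to be an
identity edge. -/

theorem SimpleGraph.Preconnected.exists_adj_mem_notMem {V : Type*} {G : SimpleGraph V}
    (hG : G.Preconnected) {S : Set V} {u v : V} (hu : u ∈ S) (hv : v ∉ S) :
    ∃ i j, G.Adj i j ∧ i ∈ S ∧ j ∉ S := by
  obtain ⟨w⟩ := hG u v
  obtain ⟨d, -, hd, hd'⟩ := w.exists_boundary_dart S hu hv
  exact ⟨d.fst, d.snd, d.adj, hd, hd'⟩

theorem SimpleGraph.Preconnected.exists_adj_eq_zero_eq_one {V : Type*} {G : SimpleGraph V}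
    (hG : G.Preconnected) {α : V → Fin 2} {p q : V} (hp : α p = 0) (hq : α q = 1) :
    ∃ i j, G.Adj i j ∧ α i = 0 ∧ α j = 1 := by
  obtain ⟨i, j, hij, hi, hj⟩ :=
    hG.exists_adj_mem_notMem (S := {k | α k = 0}) (v := q) hp (by simp [hq])
  exact ⟨i, j, hij, hi, Fin.eq_one_of_ne_zero _ hj⟩

namespace SymSet

variable (X : SymSet)

theorem exists_eq_act_of_isSkeletal_one (hX : X.IsSkeletal 1) {n : ℕ} (x : X.obj n) :
    ∃ (α : Fin (n + 1) → Fin 2) (y : X.obj 1), x = X.act α y := by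
  let Y : SymSubset X :=
    { carrier := fun k => {x | ∃ (α : Fin (k + 1) → Fin 2) (y : X.obj 1), x = X.act α y}
      act_mem := by
        rintro m n β x ⟨γ, y, rfl⟩
        exact ⟨γ ∘ β, y, X.act_comp β γ y⟩ }
  exact hX Y (fun y => ⟨id, y, (X.act_id y).symm⟩) n x

theorem edge_act {m n : ℕ} (α : Fin (m + 1) → Fin (n + 1)) (x : X.obj n) (i j : Fin (m + 1)) :
    X.edge i j (X.act α x) = X.edge (α i) (α j) x := by
  rw [edge, X.act_comp]
  congr 1
  funext t
  by_cases ht : t = 0 <;> simp [ht]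

theorem edge_zero_one (y : X.obj 1) : X.edge 0 1 y = y := by
  rw [edge, ← X.act_id y, X.act_comp]
  congr 1
  decide

theorem edge_swap {n : ℕ} (x : X.obj n) (i j : Fin (n + 1)) :
    X.edge 1 0 (X.edge i j x) = X.edge j i x :=
  X.edge_act _ x 1 0

theorem edge_edge_of_ne {a b : Fin 2} (hab : a ≠ b) (y : X.obj 1) :
    X.edge a b (X.edge a b y) = y := by
  obtain ⟨ha, hb⟩ : (if a = 0 then a else b) = 0 ∧ (if b = 0 then a else b) = 1 := by
    revert a b
    decide
  rw [show X.edge a b y = X.act _ y from rfl, X.edge_act, ha, hb, edge_zero_one]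

theorem edge_act_const {n : ℕ} (v : X.obj 0) (i j : Fin (n + 1)) :
    X.edge i j (X.act (fun _ => 0) v) = X.identityEdge v :=
  X.act_comp _ _ v

theorem isIdentityEdge_edge_self {n : ℕ} (x : X.obj n) (i : Fin (n + 1)) :
    X.IsIdentityEdge (X.edge i i x) := by
  refine ⟨X.act (fun _ => i) x, ?_⟩
  rw [identityEdge, edge, X.act_comp]
  congr 1
  funext t
  simp

theorem IsIdentityEdge.of_edge {X : SymSet} {a b : Fin 2} (hab : a ≠ b) {y : X.obj 1}
    (h : X.IsIdentityEdge (X.edge a b y)) : X.IsIdentityEdge y := by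
  obtain ⟨v, hv⟩ := h
  exact ⟨v, by rw [← X.edge_edge_of_ne hab y, hv]; exact X.edge_act_const v a b⟩

theorem edgeDom_identityEdge (v : X.obj 0) : X.edgeDom (X.identityEdge v) = v := by
  rw [edgeDom, identityEdge, X.act_comp]
  convert X.act_id v
  exact funext fun t => Subsingleton.elim (α := Fin 1) _ _

theorem identityEdge_injective : Function.Injective X.identityEdge :=
  Function.LeftInverse.injective X.edgeDom_identityEdge

theorem ne_of_edge_eq {y : X.obj 1} (hy : ¬X.IsIdentityEdge y) {a b : Fin 2} (hab : a ≠ b)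
    {n : ℕ} {z : X.obj n} {c d : Fin (n + 1)} (h : X.edge a b y = X.edge c d z) : c ≠ d := by
  rintro rfl
  exact hy (IsIdentityEdge.of_edge hab (h ▸ X.isIdentityEdge_edge_self z c))

theorem exists_eq_act_const_or_nondegenerate (hX : X.IsSkeletal 1) {n : ℕ} (x : X.obj n) :
    (∃ v : X.obj 0, x = X.act (fun _ => 0) v) ∨
      ∃ (α : Fin (n + 1) → Fin 2) (y : X.obj 1) (p q : Fin (n + 1)),
        α p = 0 ∧ α q = 1 ∧ ¬X.IsIdentityEdge y ∧ x = X.act α y := by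
  obtain ⟨α, y, rfl⟩ := X.exists_eq_act_of_isSkeletal_one hX x
  by_cases hy : X.IsIdentityEdge y
  · obtain ⟨v, rfl⟩ := hy
    exact .inl ⟨v, X.act_comp _ _ v⟩
  by_cases hα : ∃ p q, α p = 0 ∧ α q = 1
  · obtain ⟨p, q, hp, hq⟩ := hα
    exact .inr ⟨α, y, p, q, hp, hq, hy, rfl⟩
  refine .inl ⟨X.act (fun _ => α 0) y, ?_⟩
  rw [X.act_comp]
  congr 1
  funext k
  show α k = α 0
  simp only [not_exists, not_and] at hα
  have := hα 0 k
  have := hα k 0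
  omega

theorem exists_adj_not_isIdentityEdge_edge {n : ℕ} {G : SimpleGraph (Fin (n + 1))}
    (hG : G.Preconnected) {α : Fin (n + 1) → Fin 2} {p q : Fin (n + 1)} (hp : α p = 0)
    (hq : α q = 1) {y : X.obj 1} (hy : ¬X.IsIdentityEdge y) :
    ∃ i j, G.Adj i j ∧ ¬X.IsIdentityEdge (X.edge i j (X.act α y)) := by
  obtain ⟨i, j, hij, hi, hj⟩ := hG.exists_adj_eq_zero_eq_one hp hq
  exact ⟨i, j, hij, by rwa [X.edge_act, hi, hj, X.edge_zero_one]⟩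

theorem eq_of_forall_adj_edge_eq_edge {V : Type*} {G : SimpleGraph V} (hG : G.Preconnected)
    {y : X.obj 1} (hy : ¬X.IsIdentityEdge y) {α γ : V → Fin 2} {i : V} (hi : α i = γ i)
    (h : ∀ p q, G.Adj p q → X.edge (α p) (α q) y = X.edge (γ p) (γ q) y) : α = γ := by
  by_contra hne
  obtain ⟨k, hk⟩ := Function.ne_iff.mp hne
  obtain ⟨p, q, hpq, hp, hq⟩ := hG.exists_adj_mem_notMem (S := {k | α k = γ k}) hi hk
  replace hq : α q ≠ γ q := hq
  have h' := h p q hpq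
  rw [show α p = γ p from hp] at h'
  by_cases hpq' : γ p = α q
  · exact X.ne_of_edge_eq hy (hpq' ▸ hq) h'.symm hpq'
  · have := X.ne_of_edge_eq hy hpq' h'
    omega

theorem act_eq_act_of_forall_adj_edge_eq {n : ℕ} {G : SimpleGraph (Fin (n + 1))}
    (hG : G.Preconnected) {α α' : Fin (n + 1) → Fin 2} {p q : Fin (n + 1)} (hp : α p = 0)
    (hq : α q = 1) {y y' : X.obj 1} (hy : ¬X.IsIdentityEdge y)
    (h : ∀ i j, G.Adj i j → X.edge i j (X.act α y) = X.edge i j (X.act α' y')) :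
    X.act α y = X.act α' y' := by
  obtain ⟨i, j, hij, hi, hj⟩ := hG.exists_adj_eq_zero_eq_one hp hq
  have hyij : y = X.edge (α' i) (α' j) y' := by
    rw [← X.edge_act, ← h i j hij, X.edge_act, hi, hj, X.edge_zero_one]
  have hne : α' i ≠ α' j := X.ne_of_edge_eq hy zero_ne_one (X.edge_zero_one y ▸ hyij)
  have hy' : y' = X.edge (α' i) (α' j) y := by rw [hyij, X.edge_edge_of_ne hne]
  have hx' : X.act α' y' = X.act ((fun t => if t = 0 then α' i else α' j) ∘ α') y := by
    rw [hy']
    exact X.act_comp _ _ y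
  rw [hx']
  congr 1
  refine X.eq_of_forall_adj_edge_eq_edge hG hy (i := i) ?_ fun p q hpq => ?_
  · show α i = if α' i = 0 then α' i else α' j
    split_ifs <;> omega
  · simpa only [hx', X.edge_act] using h p q hpq

theorem eq_of_forall_adj_edge_eq (hX : X.IsSkeletal 1) {n : ℕ} (hn : 1 ≤ n)
    {G : SimpleGraph (Fin (n + 1))} (hG : G.Preconnected) {x x' : X.obj n}
    (h : ∀ i j, G.Adj i j → X.edge i j x = X.edge i j x') : x = x' := by
  rcases X.exists_eq_act_const_or_nondegenerate hX x with
      ⟨v, rfl⟩ | ⟨α, y, p, q, hp, hq, hy, rfl⟩ <;>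
    rcases X.exists_eq_act_const_or_nondegenerate hX x' with
      ⟨v', rfl⟩ | ⟨α', y', p', q', hp', hq', hy', rfl⟩
  · obtain ⟨i, j, hij, -⟩ := hG.exists_adj_mem_notMem (S := {0}) (v := Fin.last n) rfl
      (by simp only [Set.mem_singleton_iff, Fin.ext_iff, Fin.val_last, Fin.val_zero]; omega)
    have hv := h i j hij
    rw [X.edge_act_const, X.edge_act_const] at hv
    rw [X.identityEdge_injective hv]
  · obtain ⟨i, j, hij, hne⟩ := X.exists_adj_not_isIdentityEdge_edge hG hp' hq' hy'
    exact (hne (by rw [← h i j hij, X.edge_act_const]; exact ⟨v, rfl⟩)).elim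
  · obtain ⟨i, j, hij, hne⟩ := X.exists_adj_not_isIdentityEdge_edge hG hp hq hy
    exact (hne (by rw [h i j hij, X.edge_act_const]; exact ⟨v', rfl⟩)).elim
  · exact X.act_eq_act_of_forall_adj_edge_eq hG hp hq hy h

theorem edge_eq_of_spineMap_eq {n : ℕ} {T : SimpleGraph (Fin (n + 1))} {x x' : X.obj n}
    (h : X.spineMap T x = X.spineMap T x') {i j : Fin (n + 1)} (hij : T.Adj i j) :
    X.edge i j x = X.edge i j x' := by
  have hlt : ∀ i j, i < j → T.Adj i j → X.edge i j x = X.edge i j x' := fun i j hlt hij =>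
    congrFun (congrFun (congrFun (congrFun (congrArg Subtype.val h) i) j) hlt) hij
  rcases hij.ne.lt_or_gt with hij' | hji
  · exact hlt i j hij' hij
  · rw [← X.edge_swap x j i, ← X.edge_swap x' j i, hlt j i hji hij.symm]

theorem spineMap_injective (hX : X.IsSkeletal 1) {n : ℕ} (hn : 1 ≤ n)
    {T : SimpleGraph (Fin (n + 1))} (hT : T.Connected) : Function.Injective (X.spineMap T) :=
  fun _ _ h => X.eq_of_forall_adj_edge_eq hX hn hT.preconnected fun _ _ hij =>
    X.edge_eq_of_spineMap_eq h hij

end SymSet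

/-- every 1-skeletal symmetric simplicial set is spiny. -/
theorem stmt5 (X : SymSet) (hX : X.IsSkeletal 1) : X.Spiny :=
  fun _ hn _ hT => X.spineMap_injective hX hn hT.connected
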